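/- arXiv:2004.03050 — 2 statements merged into one kernel-verified Lean document; each statement's English description precedes it below -/
import Mathlib

section
/- Let k ≥ 1 and m ≥ 0 be integers, let B ⊆ S, let S' ⊆ S, and let T ⊆ S' with |T| ≤ k. Suppose Z ⊆ S' with |Z| ≤ min(k, m) maximizes Δ(·|B) among all subsets of S' of cardinality at most min(k, m). Then Δ(Z|B) ≥ min(m/k, 1) · Δ(T|B). -/
open Finset

variable {α : Type*}

/-- `f` is monotone on finsets. -/
def IsMonotoneFn (f : Finset α → ℝ) : Prop := ∀ A B : Finset α, A ⊆ B → f A ≤ f B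

/-- `f` is submodular. -/
def IsSubmodularFn [DecidableEq α] (f : Finset α → ℝ) : Prop :=
  ∀ A B : Finset α, A ⊆ B → ∀ s ∉ B, f (insert s A) - f A ≥ f (insert s B) - f B

/-- Marginal contribution Δ(A|B) = f(A ∪ B) − f(B). -/
def marg [DecidableEq α] (f : Finset α → ℝ) (A B : Finset α) : ℝ := f (A ∪ B) - f B

/-- Δ^l(A|B): best marginal of a subset of `A` of size at most `l`. -/
noncomputable def margSup [DecidableEq α] (f : Finset α → ℝ) (l : ℕ) (A B : Finset α) : ℝ :=
  (A.powerset.filter (fun C => C.card ≤ l)).sup' ⟨∅, by simp⟩ (fun C => marg f C B)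

/-- Union of the first `i` sets: x_0 ∪ ⋯ ∪ x_{i-1}. -/
def pref [DecidableEq α] (x : ℕ → Finset α) (i : ℕ) : Finset α := (Finset.range i).biUnion x

/-- A nominal greedy profile. -/
def NomGreedy [DecidableEq α] (f : Finset α → ℝ) (Ss : ℕ → Finset α) (k n : ℕ)
    (x : ℕ → Finset α) : Prop :=
  ∀ i < n, x i ⊆ Ss i ∧ (x i).card ≤ k ∧
    ∀ c : Finset α, c ⊆ Ss i → c.card ≤ k → f (c ∪ pref x i) ≤ f (x i ∪ pref x i)

/-- An augmented greedy profile. -/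
def AugGreedy [DecidableEq α] (f : Finset α → ℝ) (Ss : ℕ → Finset α) (k m n : ℕ)
    (x z : ℕ → Finset α) : Prop :=
  ∀ i < n,
    (x i ⊆ Ss i ∪ pref z i ∧ (x i).card ≤ k ∧
      ∀ c : Finset α, c ⊆ Ss i ∪ pref z i → c.card ≤ k →
        f (c ∪ pref x i) ≤ f (x i ∪ pref x i)) ∧
    ∃ zk zr : Finset α,
      z i = zk ∪ zr ∧ zk ⊆ Ss i ∧ zk.card ≤ min k m ∧
      (∀ w : Finset α, w ⊆ Ss i → w.card ≤ min k m →
        marg f w (pref x (i + 1)) ≤ marg f zk (pref x (i + 1))) ∧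
      zr ⊆ Ss i ∧ zr.card ≤ m - k

/-- The optimal value OPT(f, (S_i), k) over feasible profiles with n agents. -/
noncomputable def OPTval [DecidableEq α] [Fintype α] (f : Finset α → ℝ) (Ss : ℕ → Finset α)
    (n k : ℕ) : ℝ :=
  ((Finset.univ : Finset (Fin n → Finset α)).filter
      (fun y => ∀ i : Fin n, y i ⊆ Ss (i : ℕ) ∧ (y i).card ≤ k)).sup'
    ⟨(fun _ => ∅), by simp⟩ (fun y => f (Finset.univ.biUnion (fun i => y i)))

/-!
By submodularity the "last-in" marginals `Δ({t} | (T \ {t}) ∪ B)`, `t ∈ T`, sum to at most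
`Δ(T|B)`, so some element can be removed from `T` keeping a `(|T| - 1)/|T|` fraction of
`Δ(T|B)`. Removing elements one at a time down to size `m' = min(m, |T|)`, the fractions
telescope: some `W ⊆ T` of size `m'` has `Δ(W|B) ≥ (m'/|T|) Δ(T|B) ≥ min(m/k, 1) Δ(T|B)`,
and `W` competes with `Z`.
-/

section Submodular

variable [DecidableEq α] {f : Finset α → ℝ}

lemma marg_nonneg (hmono : IsMonotoneFn f) (A B : Finset α) : 0 ≤ marg f A B :=
  sub_nonneg.2 (hmono B (A ∪ B) subset_union_right)

lemma insert_sub_le_insert_sub_of_subset (hmono : IsMonotoneFn f) (hsub : IsSubmodularFn f)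
    (s : α) {X Y : Finset α} (h : X ⊆ Y) :
    f (insert s Y) - f Y ≤ f (insert s X) - f X := by
  by_cases hs : s ∈ Y
  · rw [insert_eq_self.2 hs, sub_self, sub_nonneg]
    exact hmono X (insert s X) (subset_insert s X)
  · exact hsub X Y h s hs

lemma sum_sub_erase_le_marg (hmono : IsMonotoneFn f) (hsub : IsSubmodularFn f)
    (T B : Finset α) :
    ∑ t ∈ T, (f (T ∪ B) - f (T.erase t ∪ B)) ≤ marg f T B := by
  induction T using Finset.induction_on with
  | empty => simp [marg]
  | insert t T htT ih =>
    have hterm : ∀ s ∈ T, f (insert t T ∪ B) - f ((insert t T).erase s ∪ B)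
        ≤ f (T ∪ B) - f (T.erase s ∪ B) := by
      intro s hs
      have hst : s ≠ t := fun h => htT (h ▸ hs)
      have h₁ : insert t T ∪ B = insert s (insert t (T.erase s ∪ B)) := by
        ext x; simp only [mem_union, mem_insert, mem_erase]; grind
      have h₂ : (insert t T).erase s ∪ B = insert t (T.erase s ∪ B) := by
        rw [erase_insert_of_ne hst.symm, insert_union]
      have h₃ : T ∪ B = insert s (T.erase s ∪ B) := by
        rw [← insert_union, insert_erase hs]
      rw [h₁, h₂, h₃]
      exact insert_sub_le_insert_sub_of_subset hmono hsub s (subset_insert t _)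
    rw [sum_insert htT, erase_insert htT]
    have hsum := sum_le_sum hterm
    simp only [marg] at ih ⊢
    linarith

lemma exists_mem_card_sub_one_mul_marg_le (hmono : IsMonotoneFn f) (hsub : IsSubmodularFn f)
    {T : Finset α} (hT : T.Nonempty) (B : Finset α) :
    ∃ t ∈ T, ((T.card : ℝ) - 1) * marg f T B ≤ T.card * marg f (T.erase t) B := by
  have hsum : ((T.card : ℝ) - 1) * marg f T B ≤ ∑ t ∈ T, marg f (T.erase t) B := by
    have h := sum_sub_erase_le_marg hmono hsub T B
    simp only [marg, sum_sub_distrib, sum_const, nsmul_eq_mul] at h ⊢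
    linarith
  refine exists_le_of_sum_le hT ?_
  rw [sum_const, nsmul_eq_mul, ← mul_sum]
  exact mul_le_mul_of_nonneg_left hsum (Nat.cast_nonneg _)

lemma exists_subset_card_eq_mul_marg_le (hmono : IsMonotoneFn f) (hsub : IsSubmodularFn f)
    (B : Finset α) {m : ℕ} (T : Finset α) (hm : m ≤ T.card) :
    ∃ W ⊆ T, W.card = m ∧ (m : ℝ) * marg f T B ≤ T.card * marg f W B := by
  induction T using Finset.strongInduction with
  | H T ih =>
  rcases hm.eq_or_lt with hmT | hmT
  · exact ⟨T, subset_rfl, hmT.symm, by rw [hmT]⟩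
  obtain ⟨t, ht, hstep⟩ :=
    exists_mem_card_sub_one_mul_marg_le hmono hsub (T := T) (card_pos.1 (by omega)) B
  have hcard : (T.erase t).card = T.card - 1 := card_erase_of_mem ht
  obtain ⟨W, hWT, hWcard, hW⟩ := ih (T.erase t) (erase_ssubset ht) (by omega)
  refine ⟨W, hWT.trans (erase_subset t T), hWcard, ?_⟩
  rw [hcard, Nat.cast_sub (by omega : 1 ≤ T.card), Nat.cast_one] at hW
  rcases Nat.eq_zero_or_pos m with rfl | hm₀
  · simpa using mul_nonneg (Nat.cast_nonneg T.card) (marg_nonneg hmono W B)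
  have hr : (0 : ℝ) < T.card - 1 := by
    have : (2 : ℝ) ≤ T.card := by exact_mod_cast (by omega : 2 ≤ T.card)
    linarith
  refine le_of_mul_le_mul_left ?_ hr
  linarith [mul_le_mul_of_nonneg_left hstep (Nat.cast_nonneg m : (0 : ℝ) ≤ m),
    mul_le_mul_of_nonneg_left hW (Nat.cast_nonneg T.card : (0 : ℝ) ≤ T.card)]

lemma min_div_one_mul_card_le {k m r : ℕ} (hr : r ≤ k) :
    min ((m : ℝ) / k) 1 * r ≤ (min m r : ℕ) := by
  rw [min_mul_of_nonneg _ _ (Nat.cast_nonneg r), one_mul, Nat.cast_min]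
  refine min_le_min ?_ le_rfl
  rcases Nat.eq_zero_or_pos k with rfl | hk
  · simp
  rw [div_mul_eq_mul_div, div_le_iff₀ (Nat.cast_pos.2 hk)]
  exact mul_le_mul_of_nonneg_left (Nat.cast_le.2 hr) (Nat.cast_nonneg m)

lemma exists_subset_card_le_min_mul_marg_le (hmono : IsMonotoneFn f) (hsub : IsSubmodularFn f)
    {k : ℕ} (m : ℕ) (B : Finset α) {T : Finset α} (hT : T.card ≤ k) :
    ∃ W ⊆ T, W.card ≤ min k m ∧ min ((m : ℝ) / k) 1 * marg f T B ≤ marg f W B := by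
  rcases T.eq_empty_or_nonempty with rfl | hne
  · exact ⟨∅, subset_rfl, by simp, by simp [marg]⟩
  obtain ⟨W, hWT, hWcard, hW⟩ :=
    exists_subset_card_eq_mul_marg_le hmono hsub B T (min_le_right m T.card)
  refine ⟨W, hWT, by omega, ?_⟩
  have hr : (0 : ℝ) < T.card := Nat.cast_pos.2 hne.card_pos
  refine le_of_mul_le_mul_right ?_ hr
  linarith [mul_le_mul_of_nonneg_right (min_div_one_mul_card_le (m := m) hT)
    (marg_nonneg hmono T B)]

end Submodular

theorem stmt6_general [DecidableEq α] (f : Finset α → ℝ)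
    (hmono : IsMonotoneFn f) (hsub : IsSubmodularFn f)
    (k m : ℕ) (B S' T Z : Finset α)
    (hT : T ⊆ S') (hTcard : T.card ≤ k)
    (hZmax : ∀ W ⊆ S', W.card ≤ min k m → marg f W B ≤ marg f Z B) :
    marg f Z B ≥ min ((m : ℝ) / k) 1 * marg f T B := by
  obtain ⟨W, hWT, hWcard, hW⟩ := exists_subset_card_le_min_mul_marg_le hmono hsub m B hTcard
  exact hW.trans (hZmax W (hWT.trans hT) hWcard)

/-- The best message of size min(k,m) recovers a min(m/k, 1) fraction of the marginal of any
feasible selection `T` of size at most `k`. -/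
theorem stmt6 [DecidableEq α] [Fintype α] (f : Finset α → ℝ)
    (hnorm : f ∅ = 0) (hmono : IsMonotoneFn f) (hsub : IsSubmodularFn f)
    (k m : ℕ) (hk : 1 ≤ k) (B S' T Z : Finset α)
    (hT : T ⊆ S') (hTcard : T.card ≤ k)
    (hZ : Z ⊆ S') (hZcard : Z.card ≤ min k m)
    (hZmax : ∀ W ⊆ S', W.card ≤ min k m → marg f W B ≤ marg f Z B) :
    marg f Z B ≥ min ((m : ℝ) / k) 1 * marg f T B :=
  stmt6_general f hmono hsub k m B S' T Z hT hTcard hZmax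
end

section
/- Let n ≥ 2, k ≥ 1, m ≥ 0, and let S_1, …, S_n ⊆ S be action sets. Let (x_i^ng)_{i=1}^n be a nominal greedy profile, let z_1, …, z_{n−1} with z_i ⊆ S_i and |z_i| ≤ m, and let x_1^ag, …, x_n^ag be any sets with x_i^ag ⊆ S_i ∪ z_1 ∪ … ∪ z_{i−1} and |x_i^ag| ≤ k. Writing Z̃ := (z_1 ∪ … ∪ z_{n−1}) ∩ (x_1^ag ∪ … ∪ x_n^ag) and x^ng := x_1^ng ∪ … ∪ x_n^ng, it holds that f(x_1^ag ∪ … ∪ x_n^ag) ≤ 2·f(x^ng) + Δ(Z̃ | x^ng). -/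
open Finset

variable {α : Type*}

/-!
Put `C := Z̃ ∪ x^ng`. Every element of `x_i^ag` outside `C` lies in `S_i`, because the
elements borrowed from `z_1 ∪ ⋯ ∪ z_{i-1}` are in `Z̃`. So `x_i^ag \ C` is a feasible
action for agent `i`, and by submodularity and the greedy choice
`Δ(x_i^ag | C) ≤ Δ(x_i^ag \ C | x_1^ng ∪ ⋯ ∪ x_{i-1}^ng) ≤ Δ(x_i^ng | x_1^ng ∪ ⋯ ∪ x_{i-1}^ng)`.
Summing, the right-hand side telescopes to `f(x^ng)`, hence
`f(x^ag) ≤ f(C) + f(x^ng) = 2 f(x^ng) + Δ(Z̃ | x^ng)`.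
-/

section Marginal

variable [DecidableEq α] {f : Finset α → ℝ}

lemma pref_succ (x : ℕ → Finset α) (i : ℕ) : pref x (i + 1) = x i ∪ pref x i := by
  simp [pref, range_add_one]

lemma pref_mono (x : ℕ → Finset α) {i j : ℕ} (h : i ≤ j) : pref x i ⊆ pref x j :=
  biUnion_subset_biUnion_of_subset_left x (range_subset_range.2 h)

lemma subset_pref (x : ℕ → Finset α) {i n : ℕ} (h : i < n) : x i ⊆ pref x n :=
  subset_biUnion_of_mem x (mem_range.2 h)

lemma marg_sdiff_self (A B : Finset α) : marg f (A \ B) B = marg f A B := by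
  rw [marg, marg, sdiff_union_self_eq_union]

lemma sum_marg_pref (x : ℕ → Finset α) (n : ℕ) :
    ∑ i ∈ range n, marg f (x i) (pref x i) = f (pref x n) - f ∅ := by
  simp only [marg, ← pref_succ]
  simpa [pref] using sum_range_sub (fun i => f (pref x i)) n

variable (hmono : IsMonotoneFn f) (hsub : IsSubmodularFn f)
include hmono hsub

lemma marg_le_marg_of_subset (A : Finset α) {C D : Finset α} (hCD : C ⊆ D) :
    marg f A D ≤ marg f A C := by
  induction A using Finset.induction_on with
  | empty => simp [marg]
  | @insert a A _ ih =>
    have step : f (insert a (A ∪ D)) - f (A ∪ D) ≤ f (insert a (A ∪ C)) - f (A ∪ C) := by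
      by_cases haD : a ∈ A ∪ D
      · rw [insert_eq_self.2 haD]
        linarith [hmono _ _ (subset_insert a (A ∪ C))]
      · exact hsub _ _ (union_subset_union_right hCD) a haD
    simp only [marg, insert_union] at ih ⊢
    linarith

lemma marg_pref_le_sum (x : ℕ → Finset α) (C : Finset α) (n : ℕ) :
    marg f (pref x n) C ≤ ∑ i ∈ range n, marg f (x i) C := by
  induction n with
  | zero => simp [pref, marg]
  | succ n ih =>
    have h := marg_le_marg_of_subset hmono hsub (x n) (subset_union_right : C ⊆ pref x n ∪ C)
    simp only [marg, pref_succ, sum_range_succ, union_assoc] at ih h ⊢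
    linarith

lemma NomGreedy.marg_pref_le {Ss : ℕ → Finset α} {k n : ℕ} {x : ℕ → Finset α}
    (hng : NomGreedy f Ss k n x) (hnorm : f ∅ = 0) {y : ℕ → Finset α} {C : Finset α}
    (hC : pref x n ⊆ C) (hy : ∀ i < n, y i \ C ⊆ Ss i ∧ (y i).card ≤ k) :
    marg f (pref y n) C ≤ f (pref x n) := by
  have hstep : ∀ i ∈ range n, marg f (y i) C ≤ marg f (x i) (pref x i) := by
    intro i hi
    rw [mem_range] at hi
    calc marg f (y i) C = marg f (y i \ C) C := (marg_sdiff_self _ _).symm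
      _ ≤ marg f (y i \ C) (pref x i) :=
        marg_le_marg_of_subset hmono hsub _ ((pref_mono x hi.le).trans hC)
      _ ≤ marg f (x i) (pref x i) := by
        have := (hng i hi).2.2 (y i \ C) (hy i hi).1
          ((card_le_card sdiff_subset).trans (hy i hi).2)
        simp only [marg]
        linarith
  calc marg f (pref y n) C ≤ ∑ i ∈ range n, marg f (y i) C := marg_pref_le_sum hmono hsub y C n
    _ ≤ ∑ i ∈ range n, marg f (x i) (pref x i) := sum_le_sum hstep
    _ = f (pref x n) := by rw [sum_marg_pref, hnorm, sub_zero]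

end Marginal

theorem stmt9_general [DecidableEq α] (f : Finset α → ℝ)
    (hnorm : f ∅ = 0) (hmono : IsMonotoneFn f) (hsub : IsSubmodularFn f)
    (n k : ℕ) (Ss : ℕ → Finset α)
    (xng : ℕ → Finset α) (hng : NomGreedy f Ss k n xng)
    (z xag : ℕ → Finset α)
    (hag : ∀ i < n, xag i ⊆ Ss i ∪ pref z i ∧ (xag i).card ≤ k) :
    f (pref xag n) ≤ 2 * f (pref xng n) +
      marg f (pref z (n - 1) ∩ pref xag n) (pref xng n) := by
  set C := (pref z (n - 1) ∩ pref xag n) ∪ pref xng n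
  have hfeas : ∀ i < n, xag i \ C ⊆ Ss i ∧ (xag i).card ≤ k := by
    refine fun i hi => ⟨fun a ha => ?_, (hag i hi).2⟩
    obtain ⟨hax, haC⟩ := mem_sdiff.1 ha
    refine (mem_union.1 ((hag i hi).1 hax)).resolve_right fun haz => haC ?_
    exact mem_union_left _ <| mem_inter.2
      ⟨pref_mono z (by omega) haz, subset_pref xag hi hax⟩
  have hgain := hng.marg_pref_le hmono hsub hnorm subset_union_right hfeas
  calc f (pref xag n) ≤ f (pref xag n ∪ C) := hmono _ _ subset_union_left
    _ = marg f (pref xag n) C + marg f (pref z (n - 1) ∩ pref xag n) (pref xng n)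
          + f (pref xng n) := by simp only [marg, C]; ring
    _ ≤ 2 * f (pref xng n) + marg f (pref z (n - 1) ∩ pref xag n) (pref xng n) := by
      linarith

/-- First chain of inequalities in the proof of Theorem 2. -/
theorem stmt9 [DecidableEq α] [Fintype α] (f : Finset α → ℝ)
    (hnorm : f ∅ = 0) (hmono : IsMonotoneFn f) (hsub : IsSubmodularFn f)
    (n k m : ℕ) (hn : 2 ≤ n) (hk : 1 ≤ k) (Ss : ℕ → Finset α)
    (xng : ℕ → Finset α) (hng : NomGreedy f Ss k n xng)
    (z xag : ℕ → Finset α)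
    (hz : ∀ i < n - 1, z i ⊆ Ss i ∧ (z i).card ≤ m)
    (hag : ∀ i < n, xag i ⊆ Ss i ∪ pref z i ∧ (xag i).card ≤ k) :
    f (pref xag n) ≤ 2 * f (pref xng n) +
      marg f (pref z (n - 1) ∩ pref xag n) (pref xng n) :=
  stmt9_general f hnorm hmono hsub n k Ss xng hng z xag hag
end
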